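/- arXiv:1902.04221 — 3 statements merged into one kernel-verified Lean document; each statement's English description precedes it below -/
import Mathlib

section
/- Let L : ℝ³ × ℝ × ℝ³ → ℝ be smooth such that for each (ρ,g) the map u ↦ ∇_u L(u,ρ,g) is a bijection of ℝ³ with smooth inverse u̲(p,ρ,g), and let H(p,ρ,g) := u̲(p,ρ,g)·p − L(u̲(p,ρ,g),ρ,g). Then the map I sending a smooth pair (ρ, p) on ℝ³ × ℝ to (ρ, u) with u(x,t) := u̲(p(x,t), ρ(x,t), ∇ρ(x,t)) is a bijection from the set of smooth solutions of the mLBEP equations onto the set of smooth solutions of the LBEP equations; in particular (ρ,p) solves mLBEP if and only if (ρ, u̲(p,ρ,∇ρ)) solves LBEP. -/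
/-!
Statement 4: The Legendre transform `I : (ρ, p) ↦ (ρ, u̲(p, ρ, ∇ρ))` is a bijection from
the set of smooth solutions of the mLBEP equations onto the set of smooth solutions of the
LBEP equations; in particular `(ρ,p)` solves mLBEP iff `(ρ, u̲(p,ρ,∇ρ))` solves LBEP.
-/

noncomputable section

abbrev V3 : Type := Fin 3 → ℝ

/-- Spacetime: `(x, t) ∈ ℝ³ × ℝ`. -/
abbrev SpT : Type := V3 × ℝ

/-- Time derivative of a scalar spacetime field. -/
def pdt (f : SpT → ℝ) (z : SpT) : ℝ := fderiv ℝ f z (0, 1)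

/-- Spatial partial derivative `∂_i` of a scalar spacetime field. -/
def pdx (f : SpT → ℝ) (i : Fin 3) (z : SpT) : ℝ := fderiv ℝ f z (Pi.single i 1, 0)

/-- Spatial gradient. -/
def gradx (f : SpT → ℝ) (z : SpT) : V3 := fun i => pdx f i z

/-- Spatial divergence of a vector field. -/
def divx (w : SpT → V3) (z : SpT) : ℝ := ∑ i, pdx (fun z' => w z' i) i z

/-- Spatial divergence of a matrix field, `(∇·T)_j = Σ_i ∂_i T_{ij}`. -/
def divMat (T : SpT → Fin 3 → Fin 3 → ℝ) (z : SpT) (j : Fin 3) : ℝ :=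
  ∑ i, pdx (fun z' => T z' i j) i z

/-- `∂L/∂u` (gradient in the first, vector, argument). -/
def dFdu (L : V3 × ℝ × V3 → ℝ) (q : V3 × ℝ × V3) : V3 :=
  fun i => fderiv ℝ L q (Pi.single i 1, 0, 0)

/-- `∂L/∂ρ` (derivative in the middle, scalar, argument). -/
def dFdrho (L : V3 × ℝ × V3 → ℝ) (q : V3 × ℝ × V3) : ℝ :=
  fderiv ℝ L q (0, 1, 0)

/-- `∂L/∂g` (gradient in the last, vector, argument). -/
def dFdg (L : V3 × ℝ × V3 → ℝ) (q : V3 × ℝ × V3) : V3 :=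
  fun i => fderiv ℝ L q (0, 0, Pi.single i 1)

/-- The Hamiltonian density `H(p,ρ,g) = u̲(p,ρ,g)·p − L(u̲(p,ρ,g),ρ,g)`. -/
def Ham (L : V3 × ℝ × V3 → ℝ) (ub : V3 × ℝ × V3 → V3) (q : V3 × ℝ × V3) : ℝ :=
  (∑ i, ub q i * q.1 i) - L (ub q, q.2.1, q.2.2)

/-- The local barotropic Euler–Poincaré (LBEP) equations for `(ρ, u)`:
continuity `∂_tρ + ∇·(ρu) = 0` and the momentum equation
`∂_t(∂L/∂u) + ∇·(u ⊗ ∂L/∂u) = ∇·([ρ ∂L/∂ρ − ρ ∇·(∂L/∂g) − L]𝕀 + (∂L/∂g) ⊗ ∇ρ)`,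
all derivatives of `L` evaluated at `(u, ρ, ∇ρ)`. -/
def LBEP (L : V3 × ℝ × V3 → ℝ) (ρ : SpT → ℝ) (u : SpT → V3) : Prop :=
  (∀ z : SpT, pdt ρ z + divx (fun z' => fun i => ρ z' * u z' i) z = 0) ∧
  (∀ (z : SpT) (j : Fin 3),
    fderiv ℝ (fun z' => dFdu L (u z', ρ z', gradx ρ z') j) z (0, 1)
      + divMat (fun z' => fun i j' => u z' i * dFdu L (u z', ρ z', gradx ρ z') j') z j =
    divMat (fun z' => fun i j' =>
      (ρ z' * dFdrho L (u z', ρ z', gradx ρ z')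
        - ρ z' * divx (fun z'' => dFdg L (u z'', ρ z'', gradx ρ z'')) z'
        - L (u z', ρ z', gradx ρ z')) * (if i = j' then 1 else 0)
      + dFdg L (u z', ρ z', gradx ρ z') i * gradx ρ z' j') z j)

/-- The momentum form (mLBEP) equations for `(ρ, p)`, with Hamiltonian density `H`:
`∂_tρ + ∇·(ρ ∂H/∂p) = 0` and
`∂_t p + ∇·(∂H/∂p ⊗ p + ∂H/∂g ⊗ ∇ρ) = −∇(ρ ∂H/∂ρ − ρ ∇·(∂H/∂g) + p·∂H/∂p − H)`,
all derivatives of `H` evaluated at `(p, ρ, ∇ρ)`. -/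
def mLBEP (H : V3 × ℝ × V3 → ℝ) (ρ : SpT → ℝ) (p : SpT → V3) : Prop :=
  (∀ z : SpT,
    pdt ρ z + divx (fun z' => fun i => ρ z' * dFdu H (p z', ρ z', gradx ρ z') i) z = 0) ∧
  (∀ (z : SpT) (j : Fin 3),
    fderiv ℝ (fun z' => p z' j) z (0, 1)
      + divMat (fun z' => fun i j' =>
          dFdu H (p z', ρ z', gradx ρ z') i * p z' j'
            + dFdg H (p z', ρ z', gradx ρ z') i * gradx ρ z' j') z j =
    - pdx (fun z' =>
        ρ z' * dFdrho H (p z', ρ z', gradx ρ z')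
          - ρ z' * divx (fun z'' => dFdg H (p z'', ρ z'', gradx ρ z'')) z'
          + (∑ k, p z' k * dFdu H (p z', ρ z', gradx ρ z') k)
          - H (p z', ρ z', gradx ρ z')) j z)


section Helpers

variable {E : Type*} [NormedAddCommGroup E] [NormedSpace ℝ E]

/-- applying the derivative in a fixed direction of a smooth map is smooth -/
lemma contDiff_fderiv_apply {f : E → ℝ} (hf : ContDiff ℝ (⊤ : ℕ∞) f) (v : E) :
    ContDiff ℝ (⊤ : ℕ∞) (fun x => fderiv ℝ f x v) := by
  exact (hf.fderiv_right ((by simp))).clm_apply contDiff_const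

lemma contDiff_pdx {f : SpT → ℝ} (hf : ContDiff ℝ (⊤ : ℕ∞) f) (i : Fin 3) :
    ContDiff ℝ (⊤ : ℕ∞) (fun z => pdx f i z) :=
  contDiff_fderiv_apply hf _

lemma contDiff_gradx {f : SpT → ℝ} (hf : ContDiff ℝ (⊤ : ℕ∞) f) :
    ContDiff ℝ (⊤ : ℕ∞) (fun z => gradx f z) :=
  contDiff_pi.2 fun i => contDiff_pdx hf i

lemma contDiff_dFdu {L : V3 × ℝ × V3 → ℝ} (hL : ContDiff ℝ (⊤ : ℕ∞) L) (i : Fin 3) :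
    ContDiff ℝ (⊤ : ℕ∞) (fun q => dFdu L q i) := contDiff_fderiv_apply hL _

lemma contDiff_dFdrho {L : V3 × ℝ × V3 → ℝ} (hL : ContDiff ℝ (⊤ : ℕ∞) L) :
    ContDiff ℝ (⊤ : ℕ∞) (fun q => dFdrho L q) := contDiff_fderiv_apply hL _

lemma contDiff_dFdg {L : V3 × ℝ × V3 → ℝ} (hL : ContDiff ℝ (⊤ : ℕ∞) L) (i : Fin 3) :
    ContDiff ℝ (⊤ : ℕ∞) (fun q => dFdg L q i) := contDiff_fderiv_apply hL _

/-- decomposition of a continuous linear functional on `V3 × ℝ × V3` -/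
lemma clm_decomp (f : (V3 × ℝ × V3) →L[ℝ] ℝ) (v : V3 × ℝ × V3) :
    f v = (∑ i, v.1 i * f (Pi.single i 1, 0, 0)) + v.2.1 * f (0, 1, 0)
        + ∑ i, v.2.2 i * f (0, 0, Pi.single i 1) := by
  have hv : v = (∑ i, v.1 i • ((Pi.single i 1 : V3), (0:ℝ), (0:V3)))
      + v.2.1 • ((0:V3), (1:ℝ), (0:V3))
      + ∑ i, v.2.2 i • ((0:V3), (0:ℝ), (Pi.single i 1 : V3)) := by
    refine Prod.ext ?_ (Prod.ext ?_ ?_)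
    · simp [Prod.fst_sum, Finset.sum_apply, Pi.single_apply]
      funext j
      simp [Finset.sum_apply, Pi.single_apply]
    · simp [Prod.snd_sum, Prod.fst_sum]
    · simp [Prod.snd_sum, Prod.fst_sum]
      funext j
      simp [Finset.sum_apply, Pi.single_apply]
  have h1 : ∀ (a : ℝ) (w : V3), f (a • w, 0, 0) = a * f (w, 0, 0) := by
    intro a w
    rw [← smul_eq_mul, ← f.map_smul]
    congr 1
    simp
  have h2 : ∀ (a : ℝ), f (0, a, 0) = a * f (0, 1, 0) := by
    intro a
    rw [← smul_eq_mul, ← f.map_smul]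
    congr 1
    simp
  have h3 : ∀ (a : ℝ) (w : V3), f (0, 0, a • w) = a * f (0, 0, w) := by
    intro a w
    rw [← smul_eq_mul, ← f.map_smul]
    congr 1
    simp
  conv_lhs => rw [hv]
  simp only [map_add, map_sum, Prod.smul_mk, smul_zero, smul_eq_mul, mul_zero]
  rw [h2]
  rw [mul_one]
  congr 1
  · congr 1
    exact Finset.sum_congr rfl fun i _ => h1 _ _
  · exact Finset.sum_congr rfl fun i _ => h3 _ _

end Helpers

section HamDeriv

variable {L : V3 × ℝ × V3 → ℝ} {ub : V3 × ℝ × V3 → V3}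

lemma ham_deriv (hL : ContDiff ℝ (⊤ : ℕ∞) L) (hub : ContDiff ℝ (⊤ : ℕ∞) ub)
    (hinv : ∀ (p : V3) (ρ : ℝ) (g : V3), dFdu L (ub (p, ρ, g), ρ, g) = p)
    (q v : V3 × ℝ × V3) :
    fderiv ℝ (Ham L ub) q v =
      (∑ i, ub q i * v.1 i) - v.2.1 * dFdrho L (ub q, q.2.1, q.2.2)
        - ∑ i, v.2.2 i * dFdg L (ub q, q.2.1, q.2.2) i := by
  have hub' : HasFDerivAt ub (fderiv ℝ ub q) q :=
    (hub.differentiable (by simp) q).hasFDerivAt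
  set Dub := fderiv ℝ ub q with hDub
  have hΦ : HasFDerivAt (fun q' : V3 × ℝ × V3 => ((ub q', q'.2) : V3 × (ℝ × V3)))
      (Dub.prod (ContinuousLinearMap.snd ℝ V3 (ℝ × V3))) q :=
    hub'.prodMk (hasFDerivAt_snd)
  have hLd : HasFDerivAt L (fderiv ℝ L (ub q, q.2)) (ub q, q.2) :=
    (hL.differentiable (by simp) _).hasFDerivAt
  have hcomp : HasFDerivAt (fun q' : V3 × ℝ × V3 => L (ub q', q'.2))
      ((fderiv ℝ L (ub q, q.2)).comp (Dub.prod (ContinuousLinearMap.snd ℝ V3 (ℝ × V3)))) q :=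
    hLd.comp q hΦ
  have hubi : ∀ i : Fin 3, HasFDerivAt (fun q' => ub q' i)
      ((ContinuousLinearMap.proj i).comp Dub) q := fun i =>
    (ContinuousLinearMap.proj i : V3 →L[ℝ] ℝ).hasFDerivAt.comp q hub'
  have hfsti : ∀ i : Fin 3, HasFDerivAt (fun q' : V3 × ℝ × V3 => q'.1 i)
      ((ContinuousLinearMap.proj i).comp (ContinuousLinearMap.fst ℝ V3 (ℝ × V3))) q := fun i =>
    (ContinuousLinearMap.proj i : V3 →L[ℝ] ℝ).hasFDerivAt.comp q
      hasFDerivAt_fst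
  have hN : HasFDerivAt (fun q' : V3 × ℝ × V3 => ∑ i, ub q' i * q'.1 i)
      (∑ i : Fin 3, (ub q i •
          ((ContinuousLinearMap.proj i).comp (ContinuousLinearMap.fst ℝ V3 (ℝ × V3)))
        + q.1 i • ((ContinuousLinearMap.proj i).comp Dub))) q := by
    refine HasFDerivAt.fun_sum fun i _ => ?_
    exact (hubi i).mul (hfsti i)
  have hH : HasFDerivAt (Ham L ub)
      ((∑ i : Fin 3, (ub q i •
          ((ContinuousLinearMap.proj i).comp (ContinuousLinearMap.fst ℝ V3 (ℝ × V3)))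
        + q.1 i • ((ContinuousLinearMap.proj i).comp Dub)))
       - (fderiv ℝ L (ub q, q.2)).comp (Dub.prod (ContinuousLinearMap.snd ℝ V3 (ℝ × V3)))) q :=
    hN.sub hcomp
  rw [hH.fderiv]
  have hdec := clm_decomp (fderiv ℝ L (ub q, q.2)) (Dub v, v.2)
  have hq : dFdu L (ub q, q.2.1, q.2.2) = q.1 := hinv q.1 q.2.1 q.2.2
  simp only [ContinuousLinearMap.sub_apply, ContinuousLinearMap.sum_apply,
    ContinuousLinearMap.add_apply, ContinuousLinearMap.smul_apply,
    ContinuousLinearMap.comp_apply, ContinuousLinearMap.proj_apply,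
    ContinuousLinearMap.coe_fst', ContinuousLinearMap.coe_snd',
    ContinuousLinearMap.prod_apply, smul_eq_mul]
  rw [hdec]
  unfold dFdu at hq
  have hq' : ∀ i, fderiv ℝ L (ub q, q.2) (Pi.single i 1, 0, 0) = q.1 i := fun i =>
    congrFun hq i
  simp only [hq']
  unfold dFdrho dFdg
  simp only [ContinuousLinearMap.coe_fst', Finset.sum_add_distrib]
  have hcm : ∑ x : Fin 3, q.1 x * Dub v x = ∑ x : Fin 3, Dub v x * q.1 x :=
    Finset.sum_congr rfl fun i _ => mul_comm _ _
  rw [hcm]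
  ring

lemma ham_dFdu (hL : ContDiff ℝ (⊤ : ℕ∞) L) (hub : ContDiff ℝ (⊤ : ℕ∞) ub)
    (hinv : ∀ (p : V3) (ρ : ℝ) (g : V3), dFdu L (ub (p, ρ, g), ρ, g) = p)
    (q : V3 × ℝ × V3) : dFdu (Ham L ub) q = ub q := by
  funext j
  show fderiv ℝ (Ham L ub) q (Pi.single j 1, 0, 0) = ub q j
  rw [ham_deriv hL hub hinv]
  simp [Pi.single_apply, mul_ite]

lemma ham_dFdrho (hL : ContDiff ℝ (⊤ : ℕ∞) L) (hub : ContDiff ℝ (⊤ : ℕ∞) ub)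
    (hinv : ∀ (p : V3) (ρ : ℝ) (g : V3), dFdu L (ub (p, ρ, g), ρ, g) = p)
    (q : V3 × ℝ × V3) : dFdrho (Ham L ub) q = - dFdrho L (ub q, q.2.1, q.2.2) := by
  show fderiv ℝ (Ham L ub) q (0, 1, 0) = _
  rw [ham_deriv hL hub hinv]
  simp

lemma ham_dFdg (hL : ContDiff ℝ (⊤ : ℕ∞) L) (hub : ContDiff ℝ (⊤ : ℕ∞) ub)
    (hinv : ∀ (p : V3) (ρ : ℝ) (g : V3), dFdu L (ub (p, ρ, g), ρ, g) = p)
    (q : V3 × ℝ × V3) : dFdg (Ham L ub) q = fun j => - dFdg L (ub q, q.2.1, q.2.2) j := by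
  funext j
  show fderiv ℝ (Ham L ub) q (0, 0, Pi.single j 1) = _
  rw [ham_deriv hL hub hinv]
  simp [Pi.single_apply, mul_ite]

end HamDeriv

section FieldHelpers

lemma pdx_neg (f : SpT → ℝ) (i : Fin 3) (z : SpT) :
    pdx (fun z' => - f z') i z = - pdx f i z := by
  unfold pdx
  rw [fderiv_fun_neg]
  simp

lemma pdx_add {f g : SpT → ℝ} {z : SpT} (hf : DifferentiableAt ℝ f z)
    (hg : DifferentiableAt ℝ g z) (i : Fin 3) :
    pdx (fun z' => f z' + g z') i z = pdx f i z + pdx g i z := by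
  unfold pdx
  rw [fderiv_fun_add hf hg]
  simp

lemma pdx_sub {f g : SpT → ℝ} {z : SpT} (hf : DifferentiableAt ℝ f z)
    (hg : DifferentiableAt ℝ g z) (i : Fin 3) :
    pdx (fun z' => f z' - g z') i z = pdx f i z - pdx g i z := by
  unfold pdx
  rw [fderiv_fun_sub hf hg]
  simp

lemma pdx_const (c : ℝ) (i : Fin 3) (z : SpT) :
    pdx (fun _ => c) i z = 0 := by
  unfold pdx
  rw [fderiv_fun_const]
  simp

end FieldHelpers

section Key

lemma pdx_mul_const {f : SpT → ℝ} {z : SpT} (hf : DifferentiableAt ℝ f z) (c : ℝ) (i : Fin 3) :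
    pdx (fun z' => f z' * c) i z = pdx f i z * c := by
  unfold pdx
  rw [fderiv_mul_const hf]
  simp [mul_comm]

lemma key {L : V3 × ℝ × V3 → ℝ} {ub : V3 × ℝ × V3 → V3}
    (hL : ContDiff ℝ (⊤ : ℕ∞) L) (hub : ContDiff ℝ (⊤ : ℕ∞) ub)
    (hinv : ∀ (p : V3) (ρ : ℝ) (g : V3), dFdu L (ub (p, ρ, g), ρ, g) = p)
    (ρ : SpT → ℝ) (p : SpT → V3) (hρ : ContDiff ℝ (⊤ : ℕ∞) ρ) (hp : ContDiff ℝ (⊤ : ℕ∞) p) :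
    mLBEP (Ham L ub) ρ p ↔ LBEP L ρ (fun z => ub (p z, ρ z, gradx ρ z)) := by
  -- smoothness infrastructure
  have hg : ContDiff ℝ (⊤ : ℕ∞) (fun z => gradx ρ z) := contDiff_gradx hρ
  have harg : ContDiff ℝ (⊤ : ℕ∞) (fun z => ((p z, ρ z, gradx ρ z) : V3 × ℝ × V3)) :=
    hp.prodMk (hρ.prodMk hg)
  have hu : ContDiff ℝ (⊤ : ℕ∞) (fun z => ub (p z, ρ z, gradx ρ z)) := hub.comp harg
  have hW : ContDiff ℝ (⊤ : ℕ∞)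
      (fun z => ((ub (p z, ρ z, gradx ρ z), ρ z, gradx ρ z) : V3 × ℝ × V3)) :=
    hu.prodMk (hρ.prodMk hg)
  have hUi : ∀ i : Fin 3, ContDiff ℝ (⊤ : ℕ∞) (fun z => ub (p z, ρ z, gradx ρ z) i) :=
    fun i => (contDiff_pi.1 hu i)
  have hpj : ∀ j : Fin 3, ContDiff ℝ (⊤ : ℕ∞) (fun z => p z j) := fun j => contDiff_pi.1 hp j
  have hgj : ∀ j : Fin 3, ContDiff ℝ (⊤ : ℕ∞) (fun z => gradx ρ z j) := fun j => contDiff_pdx hρ j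
  have hGi : ∀ i : Fin 3, ContDiff ℝ (⊤ : ℕ∞)
      (fun z => dFdg L (ub (p z, ρ z, gradx ρ z), ρ z, gradx ρ z) i) :=
    fun i => (contDiff_dFdg hL i).comp hW
  have hdv : ContDiff ℝ (⊤ : ℕ∞) (fun z =>
      divx (fun z'' => dFdg L (ub (p z'', ρ z'', gradx ρ z''), ρ z'', gradx ρ z'')) z) := by
    unfold divx
    exact ContDiff.sum fun i _ => contDiff_pdx (hGi i) i
  have hs : ContDiff ℝ (⊤ : ℕ∞) (fun z' =>
      ρ z' * dFdrho L (ub (p z', ρ z', gradx ρ z'), ρ z', gradx ρ z') -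
        ρ z' * divx (fun z'' => dFdg L (ub (p z'', ρ z'', gradx ρ z''), ρ z'', gradx ρ z'')) z' -
        L (ub (p z', ρ z', gradx ρ z'), ρ z', gradx ρ z')) :=
    ((hρ.mul ((contDiff_dFdrho hL).comp hW)).sub (hρ.mul hdv)).sub (hL.comp hW)
  unfold mLBEP LBEP
  simp only [ham_dFdu hL hub hinv, ham_dFdrho hL hub hinv, ham_dFdg hL hub hinv, hinv, Ham]
  refine and_congr Iff.rfl ?_
  refine forall_congr' fun z => ?_
  refine forall_congr' fun j => ?_
  -- Step A : RHS of mLBEP equals pdx s j z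
  have hfun1 : (fun z' =>
      ρ z' * -dFdrho L (ub (p z', ρ z', gradx ρ z'), ρ z', gradx ρ z') -
          ρ z' * divx (fun z'' j =>
            -dFdg L (ub (p z'', ρ z'', gradx ρ z''), ρ z'', gradx ρ z'') j) z' +
        ∑ x : Fin 3, p z' x * ub (p z', ρ z', gradx ρ z') x -
        (∑ x : Fin 3, ub (p z', ρ z', gradx ρ z') x * p z' x -
          L (ub (p z', ρ z', gradx ρ z'), ρ z', gradx ρ z'))) =
      (fun z' => -(ρ z' * dFdrho L (ub (p z', ρ z', gradx ρ z'), ρ z', gradx ρ z') -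
        ρ z' * divx (fun z'' => dFdg L (ub (p z'', ρ z'', gradx ρ z''), ρ z'', gradx ρ z'')) z' -
        L (ub (p z', ρ z', gradx ρ z'), ρ z', gradx ρ z'))) := by
    funext z'
    have hdvneg : divx (fun z'' j =>
        -dFdg L (ub (p z'', ρ z'', gradx ρ z''), ρ z'', gradx ρ z'') j) z' =
        - divx (fun z'' => dFdg L (ub (p z'', ρ z'', gradx ρ z''), ρ z'', gradx ρ z'')) z' := by
      unfold divx
      rw [← Finset.sum_neg_distrib]
      refine Finset.sum_congr rfl fun i _ => ?_
      exact pdx_neg _ i z'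
    have hsum : ∑ x : Fin 3, p z' x * ub (p z', ρ z', gradx ρ z') x =
        ∑ x : Fin 3, ub (p z', ρ z', gradx ρ z') x * p z' x :=
      Finset.sum_congr rfl fun i _ => mul_comm _ _
    rw [hdvneg, hsum]
    ring
  rw [hfun1]
  rw [show pdx (fun z' =>
      -(ρ z' * dFdrho L (ub (p z', ρ z', gradx ρ z'), ρ z', gradx ρ z') -
        ρ z' * divx (fun z'' => dFdg L (ub (p z'', ρ z'', gradx ρ z''), ρ z'', gradx ρ z'')) z' -
        L (ub (p z', ρ z', gradx ρ z'), ρ z', gradx ρ z'))) j z =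
      - pdx (fun z' =>
        ρ z' * dFdrho L (ub (p z', ρ z', gradx ρ z'), ρ z', gradx ρ z') -
        ρ z' * divx (fun z'' => dFdg L (ub (p z'', ρ z'', gradx ρ z''), ρ z'', gradx ρ z'')) z' -
        L (ub (p z', ρ z', gradx ρ z'), ρ z', gradx ρ z')) j z from pdx_neg _ j z, neg_neg]
  -- Step B : split the mLBEP divergence
  have hD1 : divMat (fun z' i j' =>
      ub (p z', ρ z', gradx ρ z') i * p z' j' +
        -dFdg L (ub (p z', ρ z', gradx ρ z'), ρ z', gradx ρ z') i * gradx ρ z' j') z j =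
      divMat (fun z' i j' => ub (p z', ρ z', gradx ρ z') i * p z' j') z j -
      ∑ i : Fin 3, pdx (fun z' =>
        dFdg L (ub (p z', ρ z', gradx ρ z'), ρ z', gradx ρ z') i * gradx ρ z' j) i z := by
    unfold divMat
    rw [← Finset.sum_sub_distrib]
    refine Finset.sum_congr rfl fun i _ => ?_
    have heq : (fun z' =>
        ub (p z', ρ z', gradx ρ z') i * p z' j +
          -dFdg L (ub (p z', ρ z', gradx ρ z'), ρ z', gradx ρ z') i * gradx ρ z' j) =
        (fun z' => ub (p z', ρ z', gradx ρ z') i * p z' j -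
          dFdg L (ub (p z', ρ z', gradx ρ z'), ρ z', gradx ρ z') i * gradx ρ z' j) := by
      funext z'
      ring
    rw [heq]
    exact pdx_sub (((hUi i).mul (hpj j)).differentiable (by simp) z)
      (((hGi i).mul (hgj j)).differentiable (by simp) z) i
  -- Step C : split the LBEP divergence
  have hD2 : divMat (fun z' i j' =>
      ((ρ z' * dFdrho L (ub (p z', ρ z', gradx ρ z'), ρ z', gradx ρ z') -
          ρ z' * divx (fun z'' => dFdg L (ub (p z'', ρ z'', gradx ρ z''), ρ z'', gradx ρ z'')) z' -
          L (ub (p z', ρ z', gradx ρ z'), ρ z', gradx ρ z')) *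
        if i = j' then 1 else 0) +
        dFdg L (ub (p z', ρ z', gradx ρ z'), ρ z', gradx ρ z') i * gradx ρ z' j') z j =
      pdx (fun z' =>
        ρ z' * dFdrho L (ub (p z', ρ z', gradx ρ z'), ρ z', gradx ρ z') -
        ρ z' * divx (fun z'' => dFdg L (ub (p z'', ρ z'', gradx ρ z''), ρ z'', gradx ρ z'')) z' -
        L (ub (p z', ρ z', gradx ρ z'), ρ z', gradx ρ z')) j z +
      ∑ i : Fin 3, pdx (fun z' =>
        dFdg L (ub (p z', ρ z', gradx ρ z'), ρ z', gradx ρ z') i * gradx ρ z' j) i z := by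
    unfold divMat
    have hsplit : ∀ i : Fin 3, pdx (fun z' =>
        ((ρ z' * dFdrho L (ub (p z', ρ z', gradx ρ z'), ρ z', gradx ρ z') -
            ρ z' * divx (fun z'' => dFdg L (ub (p z'', ρ z'', gradx ρ z''), ρ z'', gradx ρ z'')) z' -
            L (ub (p z', ρ z', gradx ρ z'), ρ z', gradx ρ z')) *
          if i = j then 1 else 0) +
          dFdg L (ub (p z', ρ z', gradx ρ z'), ρ z', gradx ρ z') i * gradx ρ z' j) i z =
        pdx (fun z' =>
          ρ z' * dFdrho L (ub (p z', ρ z', gradx ρ z'), ρ z', gradx ρ z') -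
          ρ z' * divx (fun z'' => dFdg L (ub (p z'', ρ z'', gradx ρ z''), ρ z'', gradx ρ z'')) z' -
          L (ub (p z', ρ z', gradx ρ z'), ρ z', gradx ρ z')) i z * (if i = j then 1 else 0) +
        pdx (fun z' =>
          dFdg L (ub (p z', ρ z', gradx ρ z'), ρ z', gradx ρ z') i * gradx ρ z' j) i z := by
      intro i
      rw [pdx_add ((hs.differentiable (by simp) z).mul_const _)
        (((hGi i).mul (hgj j)).differentiable (by simp) z) i]
      rw [pdx_mul_const (hs.differentiable (by simp) z)]
    simp only [hsplit]
    rw [Finset.sum_add_distrib]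
    congr 1
    simp [mul_ite, Finset.sum_ite_eq']
  rw [hD1, hD2]
  constructor <;> intro h <;> linarith

end Key
theorem mLBEP_LBEP_bijection (L : V3 × ℝ × V3 → ℝ) (hL : ContDiff ℝ (⊤ : ℕ∞) L)
    (ub : V3 × ℝ × V3 → V3) (hub : ContDiff ℝ (⊤ : ℕ∞) ub)
    (hbij : ∀ (ρ : ℝ) (g : V3), Function.Bijective fun u : V3 => dFdu L (u, ρ, g))
    (hinv : ∀ (p : V3) (ρ : ℝ) (g : V3), dFdu L (ub (p, ρ, g), ρ, g) = p) :
    Set.BijOn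
      (fun q : (SpT → ℝ) × (SpT → V3) =>
        ((q.1, fun z => ub (q.2 z, q.1 z, gradx q.1 z)) : (SpT → ℝ) × (SpT → V3)))
      {q | ContDiff ℝ (⊤ : ℕ∞) q.1 ∧ ContDiff ℝ (⊤ : ℕ∞) q.2 ∧ mLBEP (Ham L ub) q.1 q.2}
      {q | ContDiff ℝ (⊤ : ℕ∞) q.1 ∧ ContDiff ℝ (⊤ : ℕ∞) q.2 ∧ LBEP L q.1 q.2} ∧
    (∀ (ρ : SpT → ℝ) (p : SpT → V3), ContDiff ℝ (⊤ : ℕ∞) ρ → ContDiff ℝ (⊤ : ℕ∞) p →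
      (mLBEP (Ham L ub) ρ p ↔ LBEP L ρ (fun z => ub (p z, ρ z, gradx ρ z)))) := by
  refine ⟨⟨?_, ?_, ?_⟩, fun ρ p hρ hp => key hL hub hinv ρ p hρ hp⟩
  · -- MapsTo
    rintro ⟨ρ, p⟩ ⟨h1, h2, h3⟩
    refine ⟨h1, ?_, ?_⟩
    · exact hub.comp (h2.prodMk (h1.prodMk (contDiff_gradx h1)))
    · exact (key hL hub hinv ρ p h1 h2).1 h3
  · -- InjOn
    rintro ⟨ρ, p⟩ ⟨h1, h2, h3⟩ ⟨ρ', p'⟩ ⟨h1', h2', h3'⟩ heq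
    simp only [Prod.mk.injEq] at heq
    obtain ⟨hρe, hue⟩ := heq
    subst hρe
    refine Prod.ext rfl ?_
    show p = p'
    funext z
    have hz := congrFun hue z
    have e1 : dFdu L (ub (p z, ρ z, gradx ρ z), ρ z, gradx ρ z) = p z := hinv _ _ _
    have e2 : dFdu L (ub (p' z, ρ z, gradx ρ z), ρ z, gradx ρ z) = p' z := hinv _ _ _
    rw [← e1, ← e2, hz]
  · -- SurjOn
    rintro ⟨ρ, u⟩ ⟨h1, h2, h3⟩
    set p : SpT → V3 := fun z => dFdu L (u z, ρ z, gradx ρ z) with hpdef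
    have hp : ContDiff ℝ (⊤ : ℕ∞) p :=
      contDiff_pi.2 fun i =>
        (contDiff_dFdu hL i).comp (h2.prodMk (h1.prodMk (contDiff_gradx h1)))
    have hubq : ∀ z, ub (p z, ρ z, gradx ρ z) = u z := by
      intro z
      refine (hbij (ρ z) (gradx ρ z)).1 ?_
      show dFdu L (ub (p z, ρ z, gradx ρ z), ρ z, gradx ρ z) =
        dFdu L (u z, ρ z, gradx ρ z)
      rw [hinv]
    have hufun : (fun z => ub (p z, ρ z, gradx ρ z)) = u := funext hubq
    refine ⟨(ρ, p), ⟨h1, hp, ?_⟩, ?_⟩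
    · rw [key hL hub hinv ρ p h1 hp, hufun]
      exact h3
    · show ((ρ, fun z => ub (p z, ρ z, gradx ρ z)) : (SpT → ℝ) × (SpT → V3)) = (ρ, u)
      rw [hufun]
end
end

section
/- Let F : ℝ² × ℝⁿ → ℝⁿ be smooth, written (λ₁, λ₂, x) ↦ F_{λ₁,λ₂}(x), with the spatial Jacobian ∇F (the n×n matrix (∇F)_{ia} = ∂_i F^a) invertible at every point. For k = 1, 2 let w_k be the unique vector field (depending on λ₁, λ₂, x) satisfying ∂_{λ_k}F^a + Σ_i (w_k)_i ∂_i F^a = 0 for all a (equivalently w_k = −(∂_{λ_k}F)·(∇F)^{-1}). Then the Lin constraint identity holds at every point: ∂_{λ₂} w₁ − ∂_{λ₁} w₂ = [w₁, w₂], where [v, w] := v·∇w − w·∇v, i.e. [v,w]_j = Σ_i (v_i ∂_i w_j − w_i ∂_i v_j). -/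
/-!
Statement 8: The Lin constraint identity `∂_{λ₂} w₁ − ∂_{λ₁} w₂ = [w₁, w₂]` for the
parameter velocities `w_k = −(∂_{λ_k}F)·(∇F)⁻¹` of a smooth two-parameter family of maps
with invertible spatial Jacobian.
-/

noncomputable section

variable {n : ℕ}

/-- Spatial Jacobian `(∇F)_{ia} = ∂_i F^a` of `F : ℝ² × ℝⁿ → ℝⁿ` at a point. -/
def jac (F : ℝ × ℝ × (Fin n → ℝ) → (Fin n → ℝ)) (q : ℝ × ℝ × (Fin n → ℝ)) :
    Matrix (Fin n) (Fin n) ℝ :=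
  Matrix.of fun i a => fderiv ℝ F q (0, 0, Pi.single i 1) a

/-- The parameter velocity `w = −(∂F along direction d)·(∇F)⁻¹`, i.e. the unique vector
field with `∂_d F^a + Σ_i w_i ∂_i F^a = 0` when `∇F` is invertible. -/
def paramVel (F : ℝ × ℝ × (Fin n → ℝ) → (Fin n → ℝ)) (d : ℝ × ℝ × (Fin n → ℝ))
    (q : ℝ × ℝ × (Fin n → ℝ)) : Fin n → ℝ :=
  fun j => -∑ a, fderiv ℝ F q d a * ((jac F q)⁻¹) a j

abbrev Espace (n : ℕ) := ℝ × ℝ × (Fin n → ℝ)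

lemma contDiff_det {f : Espace n → Matrix (Fin n) (Fin n) ℝ}
    (hf : ∀ i a, ContDiff ℝ (⊤ : ℕ∞) fun q => f q i a) :
    ContDiff ℝ (⊤ : ℕ∞) fun q => (f q).det := by
  have : (fun q => (f q).det)
      = fun q => ∑ σ : Equiv.Perm (Fin n), ((Equiv.Perm.sign σ : ℤ) : ℝ) * ∏ i, f q (σ i) i := by
    funext q
    rw [Matrix.det_apply]
    congr 1; funext σ
    simp [Units.smul_def, zsmul_eq_mul]
  rw [this]
  exact ContDiff.sum fun σ _ => (contDiff_const.mul (contDiff_prod fun i _ => hf (σ i) i))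

variable {F : ℝ × ℝ × (Fin n → ℝ) → (Fin n → ℝ)}

lemma contDiff_fderiv_apply_s8 (hF : ContDiff ℝ (⊤ : ℕ∞) F) (d : Espace n) (a : Fin n) :
    ContDiff ℝ (⊤ : ℕ∞) fun q => fderiv ℝ F q d a := by
  have h1 : ContDiff ℝ (⊤ : ℕ∞) (fderiv ℝ F) := hF.fderiv_right (by simp)
  have h2 : ContDiff ℝ (⊤ : ℕ∞) fun q => fderiv ℝ F q d := h1.clm_apply contDiff_const
  exact contDiff_pi.mp h2 a

lemma contDiff_jac (hF : ContDiff ℝ (⊤ : ℕ∞) F) (i a : Fin n) :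
    ContDiff ℝ (⊤ : ℕ∞) fun q => jac F q i a :=
  contDiff_fderiv_apply_s8 hF _ a

lemma contDiff_inv_jac (hF : ContDiff ℝ (⊤ : ℕ∞) F)
    (hinv : ∀ q : ℝ × ℝ × (Fin n → ℝ), (jac F q).det ≠ 0) (a j : Fin n) :
    ContDiff ℝ (⊤ : ℕ∞) fun q => ((jac F q)⁻¹) a j := by
  have hdet : ContDiff ℝ (⊤ : ℕ∞) fun q => (jac F q).det := contDiff_det (contDiff_jac hF)
  have hadj : ContDiff ℝ (⊤ : ℕ∞) fun q => (jac F q).adjugate a j := by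
    have : (fun q => (jac F q).adjugate a j)
        = fun q => ((jac F q).updateRow j (Pi.single a 1)).det := by
      funext q; rw [Matrix.adjugate_apply]
    rw [this]
    refine contDiff_det fun i b => ?_
    by_cases h : i = j
    · subst h
      simpa [Matrix.updateRow_apply] using
        (contDiff_const : ContDiff ℝ (⊤ : ℕ∞) fun _ : Espace n => (Pi.single a 1 : Fin n → ℝ) b)
    · simpa [Matrix.updateRow_apply, h] using contDiff_jac hF i b
  have : (fun q => ((jac F q)⁻¹) a j)
      = fun q => ((jac F q).det)⁻¹ * (jac F q).adjugate a j := by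
    funext q
    rw [Matrix.inv_def, Matrix.smul_apply, Ring.inverse_eq_inv', smul_eq_mul]
  rw [this]
  exact (hdet.inv hinv).mul hadj

lemma contDiff_paramVel (hF : ContDiff ℝ (⊤ : ℕ∞) F)
    (hinv : ∀ q : ℝ × ℝ × (Fin n → ℝ), (jac F q).det ≠ 0) (d : Espace n) :
    ContDiff ℝ (⊤ : ℕ∞) (paramVel F d) := by
  rw [contDiff_pi]
  intro j
  exact (ContDiff.sum fun a _ =>
    (contDiff_fderiv_apply_s8 hF d a).mul (contDiff_inv_jac hF hinv a j)).neg

def Jmap (n : ℕ) : (Fin n → ℝ) →L[ℝ] Espace n :=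
  (ContinuousLinearMap.inr ℝ ℝ (ℝ × (Fin n → ℝ))).comp (ContinuousLinearMap.inr ℝ ℝ (Fin n → ℝ))

lemma Jmap_apply (x : Fin n → ℝ) : Jmap n x = (0, 0, x) := rfl

lemma Jmap_decomp (x : Fin n → ℝ) :
    Jmap n x = ∑ i, x i • ((0:ℝ), (0:ℝ), (Pi.single i 1 : Fin n → ℝ)) := by
  have : x = ∑ i, x i • (Pi.single i 1 : Fin n → ℝ) := by
    funext j
    simp [Finset.sum_apply, Pi.single_apply, mul_comm]
  conv_lhs => rw [this]
  rw [map_sum]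
  congr 1; funext i
  rw [map_smul, Jmap_apply]

lemma clm_space_apply (L : Espace n →L[ℝ] (Fin n → ℝ)) (x : Fin n → ℝ) (a : Fin n) :
    L (0, 0, x) a = ∑ i, x i * L (0, 0, Pi.single i 1) a := by
  rw [← Jmap_apply, Jmap_decomp, map_sum, Finset.sum_apply]
  congr 1; funext i
  rw [map_smul, Pi.smul_apply, smul_eq_mul]

lemma paramVel_def (hinv : ∀ q : ℝ × ℝ × (Fin n → ℝ), (jac F q).det ≠ 0)
    (d q : Espace n) (a : Fin n) :
    fderiv ℝ F q d a + ∑ i, paramVel F d q i * jac F q i a = 0 := by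
  have hJ : (jac F q)⁻¹ * jac F q = 1 :=
    Matrix.nonsing_inv_mul _ (isUnit_iff_ne_zero.mpr (hinv q))
  have hP : paramVel F d q
      = -Matrix.vecMul (fun b => fderiv ℝ F q d b) ((jac F q)⁻¹) := by
    funext i
    simp [paramVel, Matrix.vecMul, dotProduct]
  have h2 : ∑ i, paramVel F d q i * jac F q i a
      = Matrix.vecMul (paramVel F d q) (jac F q) a := by
    simp [Matrix.vecMul, dotProduct]
  rw [h2, hP, Matrix.neg_vecMul, Matrix.vecMul_vecMul, hJ, Matrix.vecMul_one]
  simp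

theorem lin_constraint (n : ℕ) (F : ℝ × ℝ × (Fin n → ℝ) → (Fin n → ℝ))
    (hF : ContDiff ℝ (⊤ : ℕ∞) F)
    (hinv : ∀ q : ℝ × ℝ × (Fin n → ℝ), (jac F q).det ≠ 0) :
    ∀ (q : ℝ × ℝ × (Fin n → ℝ)) (j : Fin n),
      fderiv ℝ (fun q' => paramVel F (1, 0, 0) q' j) q (0, 1, 0)
        - fderiv ℝ (fun q' => paramVel F (0, 1, 0) q' j) q (1, 0, 0) =
      ∑ i,
        (paramVel F (1, 0, 0) q i *
            fderiv ℝ (fun q' => paramVel F (0, 1, 0) q' j) q (0, 0, Pi.single i 1)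
          - paramVel F (0, 1, 0) q i *
            fderiv ℝ (fun q' => paramVel F (1, 0, 0) q' j) q (0, 0, Pi.single i 1)) := by
  intro q j
  have hw : ∀ d : Espace n, ContDiff ℝ (⊤ : ℕ∞) (paramVel F d) := contDiff_paramVel hF hinv
  have hdF : ContDiff ℝ (⊤ : ℕ∞) (fderiv ℝ F) := hF.fderiv_right (by simp)
  have hdFq : DifferentiableAt ℝ (fderiv ℝ F) q := (hdF.differentiable (by simp)) q
  -- second derivative symmetry
  have hsym : ∀ v u : Espace n,
      fderiv ℝ (fderiv ℝ F) q v u = fderiv ℝ (fderiv ℝ F) q u v :=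
    second_derivative_symmetric (f := F)
      (fun y => ((hF.differentiable (by simp)) y).hasFDerivAt) hdFq.hasFDerivAt
  -- key: for each direction d, the function q' ↦ DF(q')(d + J w_d(q')) vanishes
  have key : ∀ (d v : Espace n),
      fderiv ℝ F q (Jmap n (fderiv ℝ (paramVel F d) q v))
        + fderiv ℝ (fderiv ℝ F) q v (d + Jmap n (paramVel F d q)) = 0 := by
    intro d v
    have hG0 : (fun q' => fderiv ℝ F q' (d + Jmap n (paramVel F d q')))
        = fun _ => (0 : Fin n → ℝ) := by
      funext q'
      funext a
      have hdef := paramVel_def (F := F) hinv d q' a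
      have : fderiv ℝ F q' (d + Jmap n (paramVel F d q')) a
          = fderiv ℝ F q' d a + ∑ i, paramVel F d q' i * jac F q' i a := by
        rw [map_add, Pi.add_apply, Jmap_apply, clm_space_apply]
        rfl
      rw [this, hdef]
      rfl
    have hu : DifferentiableAt ℝ (fun q' => d + Jmap n (paramVel F d q')) q := by
      exact (((Jmap n).differentiable.comp ((hw d).differentiable (by simp))) q).const_add d
    have hprod := fderiv_clm_apply (c := fderiv ℝ F)
      (u := fun q' => d + Jmap n (paramVel F d q')) hdFq hu
    have hzero : fderiv ℝ (fun q' => fderiv ℝ F q' (d + Jmap n (paramVel F d q'))) q = 0 := by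
      rw [hG0]; exact fderiv_const_apply 0
    have hfu : fderiv ℝ (fun q' => d + Jmap n (paramVel F d q')) q
        = (Jmap n).comp (fderiv ℝ (paramVel F d) q) := by
      rw [fderiv_const_add]
      exact ((Jmap n).hasFDerivAt.comp q ((hw d).differentiable (by simp) q).hasFDerivAt).fderiv
    have := hprod
    rw [hzero, hfu] at this
    have happ := congrArg (fun (L : Espace n →L[ℝ] Fin n → ℝ) => L v) this.symm
    simpa using happ
  -- combine at q with symmetric second derivative
  have hmain : fderiv ℝ F q (Jmap n
      (fderiv ℝ (paramVel F (1,0,0)) q ((0,1,0) + Jmap n (paramVel F (0,1,0) q))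
        - fderiv ℝ (paramVel F (0,1,0)) q ((1,0,0) + Jmap n (paramVel F (1,0,0) q)))) = 0 := by
    have h1 := key (1, 0, 0) ((0,1,0) + Jmap n (paramVel F (0,1,0) q))
    have h2 := key (0, 1, 0) ((1,0,0) + Jmap n (paramVel F (1,0,0) q))
    have hs := hsym ((0,1,0) + Jmap n (paramVel F (0,1,0) q))
      ((1,0,0) + Jmap n (paramVel F (1,0,0) q))
    rw [hs] at h1
    rw [map_sub, map_sub]
    rw [sub_eq_zero]
    exact add_right_cancel (h1.trans h2.symm)
  -- deduce the vector is zero via invertibility of jac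
  set x : Fin n → ℝ :=
    fderiv ℝ (paramVel F (1,0,0)) q ((0,1,0) + Jmap n (paramVel F (0,1,0) q))
      - fderiv ℝ (paramVel F (0,1,0)) q ((1,0,0) + Jmap n (paramVel F (1,0,0) q)) with hxdef
  have hx0 : x = 0 := by
    have hvm : Matrix.vecMul x (jac F q) = 0 := by
      funext a
      have := congrFun hmain a
      rw [Jmap_apply, clm_space_apply] at this
      simpa [Matrix.vecMul, dotProduct, jac] using this
    have hJu : jac F q * (jac F q)⁻¹ = 1 :=
      Matrix.mul_nonsing_inv _ (isUnit_iff_ne_zero.mpr (hinv q))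
    calc x = Matrix.vecMul x (jac F q * (jac F q)⁻¹) := by rw [hJu, Matrix.vecMul_one]
    _ = Matrix.vecMul (Matrix.vecMul x (jac F q)) ((jac F q)⁻¹) := by
        rw [Matrix.vecMul_vecMul]
    _ = 0 := by rw [hvm, Matrix.zero_vecMul]
  -- component of fderiv vs fderiv of component
  have hcomp : ∀ (d v : Espace n),
      fderiv ℝ (fun q' => paramVel F d q' j) q v = fderiv ℝ (paramVel F d) q v j := by
    intro d v
    have h := ((hw d).differentiable (by simp) q).hasFDerivAt
    have h2 := ((ContinuousLinearMap.proj j : (Fin n → ℝ) →L[ℝ] ℝ).hasFDerivAt.comp q h).fderiv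
    have : fderiv ℝ (fun q' => paramVel F d q' j) q
        = (ContinuousLinearMap.proj j).comp (fderiv ℝ (paramVel F d) q) := h2
    rw [this]; rfl
  -- expand linearity of the derivative in the vector-field direction
  have hexpand : ∀ (d : Espace n) (e : Espace n) (w : Fin n → ℝ),
      fderiv ℝ (paramVel F d) q (e + Jmap n w) j
        = fderiv ℝ (paramVel F d) q e j
          + ∑ i, w i * fderiv ℝ (paramVel F d) q (0, 0, Pi.single i 1) j := by
    intro d e w
    rw [map_add, Pi.add_apply]
    congr 1
    rw [Jmap_decomp, map_sum, Finset.sum_apply]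
    congr 1; funext i
    rw [map_smul, Pi.smul_apply, smul_eq_mul]
  have hxj := congrFun hx0 j
  rw [hxdef] at hxj
  have hxj' : fderiv ℝ (paramVel F (1,0,0)) q ((0,1,0) + Jmap n (paramVel F (0,1,0) q)) j
      = fderiv ℝ (paramVel F (0,1,0)) q ((1,0,0) + Jmap n (paramVel F (1,0,0) q)) j := by
    have := hxj
    simp only [Pi.sub_apply, Pi.zero_apply, sub_eq_zero] at this
    exact this
  rw [hexpand, hexpand] at hxj'
  simp only [hcomp]
  rw [Finset.sum_sub_distrib]
  linarith [hxj']
end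
end

section
/- Let X and Y be real Banach spaces, Θ : X × Y → L(X × Y, ℝ) a C¹ map into continuous linear functionals (a one-form), and H : X × Y → ℝ a C¹ function. For C¹ paths γ : [t₁,t₂] → X × Y define the action A(γ) := ∫_{t₁}^{t₂} ( Θ(γ(t))[γ'(t)] − H(γ(t)) ) dt. Say γ is a critical point of A if for every C¹ family Γ : (−1,1) × [t₁,t₂] → X × Y with Γ(0,·) = γ and Γ(ε, t₁) = γ(t₁), Γ(ε, t₂) = γ(t₂) for all ε, the function ε ↦ A(Γ(ε,·)) has vanishing derivative at ε = 0. Let y* : X → Y be C¹ and suppose γ(t) = (x(t), y*(x(t))) for a C¹ path x : [t₁,t₂] → X, and that γ is a critical point of A. Then x is a critical point (in the same fixed-endpoint sense) of the slow action A_slow(x) := ∫_{t₁}^{t₂} ( Θ_slow(x(t))[x'(t)] − H_slow(x(t)) ) dt, where Θ_slow(x)[δx] := Θ(x, y*(x))[(δx, Dy*(x)[δx])] and H_slow(x) := H(x, y*(x)). -/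
noncomputable section

/-- Fixed-endpoint criticality of a path `γ` for the action with integrand
`lag (γ t) (γ' t)`: for every `C¹` family of paths `Γ` with `Γ 0 = γ` and fixed endpoints,
the derivative of `ε ↦ ∫_{t₁}^{t₂} lag (Γ ε t) ((Γ ε)' t) dt` vanishes at `ε = 0`. -/
def ActionCritical {E : Type*} [NormedAddCommGroup E] [NormedSpace ℝ E]
    (lag : E → E → ℝ) (t₁ t₂ : ℝ) (γ : ℝ → E) : Prop :=
  ∀ Γ : ℝ → ℝ → E, ContDiff ℝ 1 (Function.uncurry Γ) →
    (∀ t, Γ 0 t = γ t) → (∀ ε, Γ ε t₁ = γ t₁) → (∀ ε, Γ ε t₂ = γ t₂) →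
    deriv (fun ε => ∫ t in t₁..t₂, lag (Γ ε t) (deriv (Γ ε) t)) 0 = 0

/-- Every fixed-endpoint variation of `ξ` pushes forward under `φ` to one of `φ ∘ ξ`, and by
the chain rule the two have the same action. -/
theorem ActionCritical.of_comp {E F : Type*} [NormedAddCommGroup E] [NormedSpace ℝ E]
    [NormedAddCommGroup F] [NormedSpace ℝ F] {lag : F → F → ℝ} {t₁ t₂ : ℝ}
    {φ : E → F} (hφ : ContDiff ℝ 1 φ) {ξ : ℝ → E} (hcrit : ActionCritical lag t₁ t₂ (φ ∘ ξ)) :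
    ActionCritical (fun e v => lag (φ e) (fderiv ℝ φ e v)) t₁ t₂ ξ := by
  intro Γ hΓ h0 h1 h2
  have hΓ_diff (ε t : ℝ) : DifferentiableAt ℝ (Γ ε) t :=
    (hΓ.comp (contDiff_const.prodMk contDiff_id)).differentiable one_ne_zero t
  have hchain (ε t : ℝ) :
      deriv (fun s => φ (Γ ε s)) t = fderiv ℝ φ (Γ ε t) (deriv (Γ ε) t) :=
    fderiv_comp_deriv t (hφ.differentiable one_ne_zero _) (hΓ_diff ε t)
  have hpush := hcrit (fun ε t => φ (Γ ε t)) (hφ.comp hΓ) (by simp [h0]) (by simp [h1])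
    (by simp [h2])
  simpa only [hchain] using hpush

theorem fderiv_graph_apply {E F : Type*} [NormedAddCommGroup E] [NormedSpace ℝ E]
    [NormedAddCommGroup F] [NormedSpace ℝ F] {f : E → F} {e : E}
    (hf : DifferentiableAt ℝ f e) (v : E) :
    fderiv ℝ (fun e => (e, f e)) e v = (v, fderiv ℝ f e v) := by
  rw [differentiableAt_fun_id.fderiv_prodMk hf]
  simp

theorem slow_manifold_inherits_variational_structure_general
    {X Y : Type*} [NormedAddCommGroup X] [NormedSpace ℝ X]
    [NormedAddCommGroup Y] [NormedSpace ℝ Y]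
    (Θ : X × Y → (X × Y) →L[ℝ] ℝ)
    (H : X × Y → ℝ)
    (ystar : X → Y) (hystar : ContDiff ℝ 1 ystar)
    (t₁ t₂ : ℝ)
    (x : ℝ → X)
    (hcrit : ActionCritical (fun z v => Θ z v - H z) t₁ t₂
      (fun t => (x t, ystar (x t)))) :
    ActionCritical
      (fun ξ v => Θ (ξ, ystar ξ) (v, fderiv ℝ ystar ξ v) - H (ξ, ystar ξ))
      t₁ t₂ x := by
  have hgraph : ContDiff ℝ 1 fun ξ => (ξ, ystar ξ) := contDiff_id.prodMk hystar
  have hslow := ActionCritical.of_comp hgraph hcrit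
  simpa only [fderiv_graph_apply (hystar.differentiable one_ne_zero _)] using hslow

theorem slow_manifold_inherits_variational_structure
    {X Y : Type*} [NormedAddCommGroup X] [NormedSpace ℝ X]
    [NormedAddCommGroup Y] [NormedSpace ℝ Y]
    (Θ : X × Y → (X × Y) →L[ℝ] ℝ) (hΘ : ContDiff ℝ 1 Θ)
    (H : X × Y → ℝ) (hH : ContDiff ℝ 1 H)
    (ystar : X → Y) (hystar : ContDiff ℝ 1 ystar)
    (t₁ t₂ : ℝ)
    (x : ℝ → X) (hx : ContDiff ℝ 1 x)
    (hcrit : ActionCritical (fun z v => Θ z v - H z) t₁ t₂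
      (fun t => (x t, ystar (x t)))) :
    ActionCritical
      (fun ξ v => Θ (ξ, ystar ξ) (v, fderiv ℝ ystar ξ v) - H (ξ, ystar ξ))
      t₁ t₂ x :=
  slow_manifold_inherits_variational_structure_general Θ H ystar hystar t₁ t₂ x hcrit
end
end
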